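/- For the matrix Y_ρ{}^α := 2ig ψ̄^a_A g^{AB} ψ_{bC} (e_ρ)_a{}^b (t^α)_B{}^C built from Grassmann bilinears, the product Y_ρ{}^β Y^σ{}_β equals M(J)_ρ{}^σ := 4g² ( (2/3) J^a{}_b J^c{}_d + 2 J^a{}_d J^c{}_b ) (e_ρ)_a{}^b (e^σ)_c{}^d. -/

import Mathlib

/-! Expanding `Y_ρ{}^β Y^σ{}_β` and summing over `β` first, the colour indices are contracted
by the completeness relation of the Gell-Mann matrices,
`∑_β (t^β)_B{}^C (t_β)_D{}^E = 2 δ_B{}^E δ_D{}^C - (2/3) δ_B{}^C δ_D{}^E`.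
The second term is directly `-(2/3) J^a{}_b J^c{}_d`. The first one pairs `ψ̄^a_B` with `ψ_{dB}`
and `ψ̄^c_C` with `ψ_{bC}`; exchanging the anticommuting `ψ_{bC}` and `ψ_{dB}` costs a sign and
gives `-2 J^a{}_d J^c{}_b`. The prefactor `(2ig)² = -4g²` then turns both signs. -/

open Finset

/-- The bispinor symplectic form `ε_{ab}`. -/
noncomputable def epsBi : Matrix (Fin 4) (Fin 4) ℂ :=
  !![0,1,0,0; -1,0,0,0; 0,0,0,-1; 0,0,1,0]

/-- The basis `e_ρ`, `ρ = 1,…,8`, of the off-diagonal 2×2 blocks of 4×4 matrices. -/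
noncomputable def eBasis : Fin 8 → Matrix (Fin 4) (Fin 4) ℂ :=
  ![Matrix.single 0 2 1, Matrix.single 0 3 1,
    Matrix.single 1 2 1, Matrix.single 1 3 1,
    Matrix.single 2 0 1, Matrix.single 2 1 1,
    Matrix.single 3 0 1, Matrix.single 3 1 1]

/-- The eight Gell-Mann matrices. -/
noncomputable def gellMann : Fin 8 → Matrix (Fin 3) (Fin 3) ℂ :=
  ![!![0,1,0; 1,0,0; 0,0,0],
    !![0,-Complex.I,0; Complex.I,0,0; 0,0,0],
    !![1,0,0; 0,-1,0; 0,0,0],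
    !![0,0,1; 0,0,0; 1,0,0],
    !![0,0,-Complex.I; 0,0,0; Complex.I,0,0],
    !![0,0,0; 0,0,1; 0,1,0],
    !![0,0,0; 0,0,-Complex.I; 0,Complex.I,0],
    ((Real.sqrt 3 : ℂ))⁻¹ • !![1,0,0; 0,1,0; 0,0,-2]]

def AntiCommute {Λ : Type*} [Mul Λ] [Neg Λ] (a b : Λ) : Prop := a * b = -(b * a)

namespace AntiCommute

variable {Λ : Type*} [Ring Λ] {a b c : Λ}

theorem symm (h : AntiCommute a b) : AntiCommute b a := by
  rw [AntiCommute, h, neg_neg]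

section Sum

variable {R ι : Type*} [CommSemiring R] [Algebra R Λ] {s : Finset ι} {r : ι → R} {b : ι → Λ}

theorem sum_smul_right (h : ∀ i ∈ s, AntiCommute a (b i)) :
    AntiCommute a (∑ i ∈ s, r i • b i) := by
  rw [AntiCommute, mul_sum, sum_mul, ← sum_neg_distrib]
  exact sum_congr rfl fun i hi => by rw [mul_smul_comm, smul_mul_assoc, h i hi, smul_neg]

theorem sum_smul_left (h : ∀ i ∈ s, AntiCommute (b i) a) :
    AntiCommute (∑ i ∈ s, r i • b i) a :=
  (sum_smul_right fun i hi => (h i hi).symm).symm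

end Sum

theorem mul_mul_swap (hab : AntiCommute a b) (hac : AntiCommute a c) (hbc : AntiCommute b c) :
    a * (b * c) = -(c * (b * a)) := by
  calc a * (b * c) = -(b * (a * c)) := by rw [← mul_assoc, hab, neg_mul, mul_assoc]
    _ = b * c * a := by rw [hac, mul_neg, neg_neg, mul_assoc]
    _ = -(c * (b * a)) := by rw [hbc, neg_mul, mul_assoc]

end AntiCommute

section Fierz

variable {V N R Λ : Type*} [Fintype N] [CommSemiring R] [Ring Λ] [Algebra R Λ]

def colorSinglet (ψbar φ : V → N → Λ) (a b : V) : Λ :=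
  ∑ B, ψbar a B * φ b B

theorem colorSinglet_mul_colorSinglet (ψbar φ : V → N → Λ) (a b c d : V) :
    colorSinglet ψbar φ a b * colorSinglet ψbar φ c d
      = ∑ B, ∑ D, ψbar a B * φ b B * (ψbar c D * φ d D) :=
  sum_mul_sum _ _ _ _

theorem sum_crossed_eq_neg_colorSinglet_mul_colorSinglet {ψbar φ : V → N → Λ}
    (hφψbar : ∀ b C c D, AntiCommute (φ b C) (ψbar c D))
    (hφφ : ∀ b C d E, AntiCommute (φ b C) (φ d E)) (a b c d : V) :
    ∑ B, ∑ C, ψbar a B * φ b C * (ψbar c C * φ d B)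
      = -(colorSinglet ψbar φ a d * colorSinglet ψbar φ c b) := by
  rw [colorSinglet, colorSinglet, sum_mul_sum, ← sum_neg_distrib]
  refine sum_congr rfl fun B _ => ?_
  rw [← sum_neg_distrib]
  refine sum_congr rfl fun C _ => ?_
  rw [mul_assoc, (hφψbar b C c C).mul_mul_swap (hφφ b C d B) (hφψbar d B c C).symm, mul_neg,
    ← mul_assoc]

theorem sum_kronecker_smul {M : Type*} [DecidableEq N] [AddCommMonoid M] [Module R M] (x y : R)
    (Z : N → N → N → N → M) :
    ∑ B, ∑ C, ∑ D, ∑ E, (x * (if B = E then 1 else 0) * (if D = C then 1 else 0)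
        + y * (if B = C then 1 else 0) * (if D = E then 1 else 0)) • Z B C D E
      = x • ∑ B, ∑ C, Z B C C B + y • ∑ B, ∑ D, Z B B D D := by
  simp [add_smul, sum_add_distrib, ite_smul, smul_sum]

variable [Fintype V]

def spinorBilinear (ψbar φ : V → N → Λ) (e : Matrix V V R) (t : Matrix N N R) : Λ :=
  ∑ a, ∑ b, ∑ B, ∑ C, (e a b * t B C) • (ψbar a B * φ b C)

theorem sum_spinorBilinear_mul_spinorBilinear {ι : Type*} [Fintype ι] (ψbar φ : V → N → Λ)
    (e f : Matrix V V R) (t : ι → Matrix N N R) :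
    ∑ α, spinorBilinear ψbar φ e (t α) * spinorBilinear ψbar φ f (t α) =
      ∑ a, ∑ b, ∑ c, ∑ d, (e a b * f c d) • ∑ B, ∑ C, ∑ D, ∑ E,
        (∑ α, t α B C * t α D E) • (ψbar a B * φ b C * (ψbar c D * φ d E)) := by
  simp only [spinorBilinear, sum_mul]
  simp only [mul_sum, smul_mul_smul_comm, smul_sum, sum_smul, smul_smul,
    sum_comm (γ := ι) (α := V), sum_comm (γ := ι) (α := N), sum_comm (γ := N) (α := V)]
  simp only [mul_assoc, mul_left_comm (t _ _ _)]

theorem sum_spinorBilinear_mul_spinorBilinear_of_completeness {ι : Type*} [Fintype ι]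
    [DecidableEq N] {ψbar φ : V → N → Λ} (hφψbar : ∀ b C c D, AntiCommute (φ b C) (ψbar c D))
    (hφφ : ∀ b C d E, AntiCommute (φ b C) (φ d E)) {t : ι → Matrix N N R} {x y : R}
    (ht : ∀ B C D E, ∑ α, t α B C * t α D E =
      x * (if B = E then 1 else 0) * (if D = C then 1 else 0)
        + y * (if B = C then 1 else 0) * (if D = E then 1 else 0))
    (e f : Matrix V V R) :
    ∑ α, spinorBilinear ψbar φ e (t α) * spinorBilinear ψbar φ f (t α) =
      ∑ a, ∑ b, ∑ c, ∑ d, (e a b * f c d) •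
        (y • (colorSinglet ψbar φ a b * colorSinglet ψbar φ c d)
          - x • (colorSinglet ψbar φ a d * colorSinglet ψbar φ c b)) := by
  rw [sum_spinorBilinear_mul_spinorBilinear]
  refine sum_congr rfl fun a _ => sum_congr rfl fun b _ => sum_congr rfl fun c _ =>
    sum_congr rfl fun d _ => ?_
  simp only [ht]
  rw [sum_kronecker_smul, sum_crossed_eq_neg_colorSinglet_mul_colorSinglet hφψbar hφφ, smul_neg,
    neg_add_eq_sub, ← colorSinglet_mul_colorSinglet]

end Fierz

theorem gellMann_completeness (B C D E : Fin 3) :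
    ∑ α, gellMann α B C * gellMann α D E =
      2 * (if B = E then 1 else 0) * (if D = C then 1 else 0)
        + (-2 / 3) * (if B = C then 1 else 0) * (if D = E then 1 else 0) := by
  have h3 : ((Real.sqrt 3 : ℂ))⁻¹ ^ 2 = 1 / 3 := by
    rw [inv_pow, ← Complex.ofReal_pow, Real.sq_sqrt (by norm_num)]; norm_num
  fin_cases B <;> fin_cases C <;> fin_cases D <;> fin_cases E <;>
    simp [gellMann, Fin.sum_univ_eight] <;> ring_nf <;> simp [h3] <;> norm_num

theorem Y_mul_Y_general {Λ : Type*} [Ring Λ] [Algebra ℂ Λ] (g : ℝ)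
    (ψ ψbar : Fin 4 → Fin 3 → Λ)
    (hψψ : ∀ a i b j, ψ a i * ψ b j = -(ψ b j * ψ a i))
    (hψψb : ∀ a i b j, ψ a i * ψbar b j = -(ψbar b j * ψ a i))
    (ψlow : Fin 4 → Fin 3 → Λ)
    (hψlow : ∀ b C, ψlow b C = ∑ c, epsBi c b • ψ c C)
    (J : Fin 4 → Fin 4 → Λ)
    (hJ : ∀ a b, J a b = ∑ A : Fin 3, ψbar a A * ψ b A)
    (Jm : Fin 4 → Fin 4 → Λ)
    (hJm : ∀ a b, Jm a b = ∑ c, epsBi c b • J a c)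
    (Y : Fin 8 → Fin 8 → Λ)
    (hY : ∀ ρ α, Y ρ α = (2 * (g : ℂ) * Complex.I) •
      ∑ a, ∑ b, ∑ B, ∑ C, (eBasis ρ a b * gellMann α B C) • (ψbar a B * ψlow b C)) :
    ∀ ρ σ : Fin 8,
      ∑ α : Fin 8, Y ρ α * Y σ α =
        (4 * (g : ℂ) ^ 2) • ∑ a, ∑ b, ∑ c, ∑ d,
          (((2 / 3) * eBasis ρ a b * eBasis σ c d) • (Jm a b * Jm c d)
            + (2 * eBasis ρ a b * eBasis σ c d) • (Jm a d * Jm c b)) := by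
  intro ρ σ
  have hlow_bar : ∀ b C c D, AntiCommute (ψlow b C) (ψbar c D) := fun b C c D => by
    rw [hψlow]
    exact AntiCommute.sum_smul_left fun e _ => hψψb e C c D
  have hlow_low : ∀ b C d E, AntiCommute (ψlow b C) (ψlow d E) := fun b C d E => by
    rw [hψlow b C, hψlow d E]
    exact AntiCommute.sum_smul_left fun e _ => AntiCommute.sum_smul_right fun e' _ => hψψ e C e' E
  have hJm_eq : Jm = colorSinglet ψbar ψlow := by
    ext a b
    simp only [hJm, hJ, hψlow, colorSinglet, smul_sum, mul_sum, mul_smul_comm]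
    exact sum_comm
  have hY' : ∀ ρ α, Y ρ α =
      (2 * (g : ℂ) * Complex.I) • spinorBilinear ψbar ψlow (eBasis ρ) (gellMann α) := hY
  have hk : (2 * (g : ℂ) * Complex.I) * (2 * (g : ℂ) * Complex.I) = -(4 * (g : ℂ) ^ 2) := by
    linear_combination (4 * (g : ℂ) ^ 2) * Complex.I_mul_I
  calc ∑ α, Y ρ α * Y σ α
      = (-(4 * (g : ℂ) ^ 2)) • ∑ α, spinorBilinear ψbar ψlow (eBasis ρ) (gellMann α)
          * spinorBilinear ψbar ψlow (eBasis σ) (gellMann α) := by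
        simp only [hY', smul_mul_smul_comm, hk, ← smul_sum]
    _ = (-(4 * (g : ℂ) ^ 2)) • ∑ a, ∑ b, ∑ c, ∑ d, (eBasis ρ a b * eBasis σ c d) •
          ((-2 / 3 : ℂ) • (Jm a b * Jm c d) - (2 : ℂ) • (Jm a d * Jm c b)) := by
        rw [sum_spinorBilinear_mul_spinorBilinear_of_completeness hlow_bar hlow_low
          gellMann_completeness, hJm_eq]
    _ = _ := by
        simp only [smul_sum]
        congr! 4
        module

/-- for `Y_ρ{}^α = 2ig ψ̄^a_A g^{AB} ψ_{bC} (e_ρ)_a{}^b (t^α)_B{}^C`,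
one has `Y_ρ{}^β Y^σ{}_β = M(J)_ρ{}^σ
  = 4g²((2/3) J^a{}_b J^c{}_d + 2 J^a{}_d J^c{}_b)(e_ρ)_a{}^b (e^σ)_c{}^d`. -/
theorem Y_mul_Y {Λ : Type*} [Ring Λ] [Algebra ℂ Λ] (g : ℝ)
    (ψ ψbar : Fin 4 → Fin 3 → Λ)
    (hψψ : ∀ a i b j, ψ a i * ψ b j = -(ψ b j * ψ a i))
    (hψbψb : ∀ a i b j, ψbar a i * ψbar b j = -(ψbar b j * ψbar a i))
    (hψψb : ∀ a i b j, ψ a i * ψbar b j = -(ψbar b j * ψ a i))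
    (ψlow : Fin 4 → Fin 3 → Λ)
    (hψlow : ∀ b C, ψlow b C = ∑ c, epsBi c b • ψ c C)
    (J : Fin 4 → Fin 4 → Λ)
    (hJ : ∀ a b, J a b = ∑ A : Fin 3, ψbar a A * ψ b A)
    (Jm : Fin 4 → Fin 4 → Λ)
    (hJm : ∀ a b, Jm a b = ∑ c, epsBi c b • J a c)
    (Y : Fin 8 → Fin 8 → Λ)
    (hY : ∀ ρ α, Y ρ α = (2 * (g : ℂ) * Complex.I) •
      ∑ a, ∑ b, ∑ B, ∑ C, (eBasis ρ a b * gellMann α B C) • (ψbar a B * ψlow b C)) :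
    ∀ ρ σ : Fin 8,
      ∑ α : Fin 8, Y ρ α * Y σ α =
        (4 * (g : ℂ) ^ 2) • ∑ a, ∑ b, ∑ c, ∑ d,
          (((2 / 3) * eBasis ρ a b * eBasis σ c d) • (Jm a b * Jm c d)
            + (2 * eBasis ρ a b * eBasis σ c d) • (Jm a d * Jm c b)) :=
  Y_mul_Y_general g ψ ψbar hψψ hψψb ψlow hψlow J hJ Jm hJm Y hY
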